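/- arXiv:2306.17111 — 8 statements merged into one kernel-verified Lean document; each statement's English description precedes it below -/
import Mathlib

section
/- Let h : [0,1] → [0,∞) be a measurable function with h(v) ≤ c for all v, and let μ_w be a non-atomic measure on [0,1] with μ_w([0,1]) = c. Then there exists a measurable subset Y* of [0,1] × [0,1] (with respect to the product σ-algebra) such that for every v ∈ [0,1], the vertical slice Y*_v = {t : (v,t) ∈ Y*} satisfies μ_w(Y*_v) = h(v). -/
open MeasureTheory Set
open scoped ENNReal

/-!
Each slice is a sublevel set `{t | F t ≤ h v}` of the distribution function `F t = μ (Iic t)`,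
which is monotone, so the set `{(v, t) | F t ≤ h v}` is measurable. For a non-atomic measure
the measure of a lower set `S` is the supremum of `F` over `S`, so `μ {F ≤ a} ≤ a`; dually the
upper set `{F > a}` has measure at most `μ univ - a`, which gives the reverse inequality.
-/

open Filter

section

variable {α : Type*} [ConditionallyCompleteLinearOrder α] [TopologicalSpace α] [OrderTopology α]
  [FirstCountableTopology α] [MeasurableSpace α] {μ : Measure α} [NullSingletonClass μ]
  {S : Set α}

theorem IsLowerSet.measure_eq_iSup_measure_Iic [(atTop : Filter α).IsCountablyGenerated]
    (hS : IsLowerSet S) : μ S = ⨆ t ∈ S, μ (Iic t) := by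
  refine le_antisymm ?_ (iSup₂_le fun t ht => measure_mono (hS.Iic_subset ht))
  by_cases hbdd : BddAbove S
  · rcases S.eq_empty_or_nonempty with rfl | hne
    · simp
    obtain ⟨u, hu_mono, hu_lim, hu_mem⟩ := exists_seq_tendsto_sSup hne hbdd
    have hcover : S ⊆ (⋃ n, Iic (u n)) ∪ {sSup S} := by
      intro t ht
      rcases (le_csSup hbdd ht).lt_or_eq with hlt | rfl
      · obtain ⟨n, hn⟩ := (hu_lim.eventually (lt_mem_nhds hlt)).exists
        exact Or.inl (mem_iUnion.2 ⟨n, hn.le⟩)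
      · exact Or.inr rfl
    calc μ S ≤ μ (⋃ n, Iic (u n)) + μ {sSup S} :=
          (measure_mono hcover).trans (measure_union_le _ _)
      _ = ⨆ n, μ (Iic (u n)) := by
        rw [measure_singleton, add_zero]
        exact (monotone_Iic.comp hu_mono).measure_iUnion
      _ ≤ ⨆ t ∈ S, μ (Iic t) := iSup_le fun n => le_biSup (fun t => μ (Iic t)) (hu_mem n)
  · have hS_univ : S = univ := eq_univ_of_forall fun x => by
      obtain ⟨y, hyS, hxy⟩ := not_bddAbove_iff.1 hbdd x
      exact hS hxy.le hyS
    refine le_of_eq ?_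
    calc μ S = μ (⋃ t, Iic t) := by rw [iUnion_Iic, hS_univ]
      _ = ⨆ t, μ (Iic t) := monotone_Iic.measure_iUnion
      _ = ⨆ t ∈ S, μ (Iic t) := by simp [hS_univ]

theorem IsUpperSet.measure_eq_iSup_measure_Ici [(atBot : Filter α).IsCountablyGenerated]
    (hS : IsUpperSet S) : μ S = ⨆ t ∈ S, μ (Ici t) :=
  @IsLowerSet.measure_eq_iSup_measure_Iic αᵒᵈ _ _ _ _ _ μ ‹_› _ _ hS.toDual

theorem measure_setOf_measure_Iic_le [(atTop : Filter α).IsCountablyGenerated]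
    [(atBot : Filter α).IsCountablyGenerated] [OpensMeasurableSpace α] [IsFiniteMeasure μ]
    {a : ℝ≥0∞} (ha : a ≤ μ univ) : μ {t | μ (Iic t) ≤ a} = a := by
  set S := {t | μ (Iic t) ≤ a}
  have hS : IsLowerSet S := fun x y hyx hx => (measure_mono (Iic_subset_Iic.2 hyx)).trans hx
  have hle : μ S ≤ a := by
    rw [hS.measure_eq_iSup_measure_Iic]
    exact iSup₂_le fun _ ht => ht
  have hcompl : μ Sᶜ ≤ μ univ - a := by
    rw [hS.compl.measure_eq_iSup_measure_Ici]
    refine iSup₂_le fun t ht => ?_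
    have hat : a < μ (Iic t) := not_le.1 ht
    rw [← compl_Iio, measure_compl measurableSet_Iio (measure_ne_top _ _),
      measure_congr Iio_ae_eq_Iic]
    exact tsub_le_tsub_left hat.le _
  have hge : a ≤ μ S :=
    calc a = μ univ - (μ univ - a) := (ENNReal.sub_sub_cancel (measure_ne_top _ _) ha).symm
      _ ≤ μ S := tsub_le_iff_right.2 <|
        (measure_univ_le_add_compl S).trans (add_le_add le_rfl hcompl)
  exact le_antisymm hle hge

end

/-- Given a non-atomic finite measure `μw` concentrated on `[0,1]` with `μw [0,1] = c`, and a
measurable function `h` with `h v ≤ c` for all `v`, there is a product-measurable set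
`Y* ⊆ ℝ × ℝ` whose vertical slices satisfy `μw (Y*_v) = h v` for every `v ∈ [0,1]`. -/
theorem stmt3 (μw : Measure ℝ) [IsFiniteMeasure μw] [NullSingletonClass μw] (c : ℝ≥0∞)
    (hc : μw (Set.Icc 0 1) = c) (hfull : μw (Set.Icc (0:ℝ) 1)ᶜ = 0)
    (h : ℝ → ℝ≥0∞) (hmeas : Measurable h) (hbound : ∀ v, h v ≤ c) :
    ∃ Y : Set (ℝ × ℝ), MeasurableSet Y ∧
      ∀ v ∈ Set.Icc (0:ℝ) 1, μw {t | (v, t) ∈ Y} = h v := by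
  have huniv : μw univ = c := by
    rw [← measure_add_measure_compl measurableSet_Icc, hc, hfull, add_zero]
  have hF : Measurable fun t => μw (Iic t) :=
    Monotone.measurable fun _ _ hst => measure_mono (Iic_subset_Iic.2 hst)
  refine ⟨{p | μw (Iic p.2) ≤ h p.1},
    measurableSet_le (hF.comp measurable_snd) (hmeas.comp measurable_fst), fun v _ => ?_⟩
  exact measure_setOf_measure_Iic_le ((hbound v).trans huniv.ge)
end

section
/- Fix δ, δ' ∈ [0,1] with δ ≥ δ', densities f_A, f_B on [0,1], and β ≥ 1, and define wage functions w₁(v) = min(v, δ) and w₂(v) = v·𝟙[v ≥ δ'] . Suppose the equal-profit equation β ∫_δ^1 (v−δ) f_A(v) dv = ∫_0^{δ'} v f_B(v) dv holds. Then for every common wage ε ∈ [0,1], the desegregation profit β ∫_ε^{w₁⁻¹(ε)} (v−ε) f_A(v) dv + ∫_ε^{w₂⁻¹(ε)} (v−ε) f_B(v) dv is at most ∫_0^1 (v−w₂(v)) f_B(v) dv, where w_i⁻¹(ε) = sup{v : w_i(v) ≤ ε}. -/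
/-!
Since `v - w₂(v) = v·𝟙[v < δ']`, the right-hand side is `∫_0^{δ'} v f_B`. For `ε < δ` we have
`w₁⁻¹(ε) = ε` and `w₂⁻¹(ε) = max(ε, δ')`, so only the surplus `∫_ε^{δ'} (v - ε) f_B` remains;
for `ε ≥ δ ≥ δ'` we have `w₁⁻¹(ε) = 1` and `w₂⁻¹(ε) = ε`, so only `β ∫_ε^1 (v - ε) f_A` remains,
and the equal-profit equation turns the bound into `β ∫_δ^1 (v - δ) f_A`. Both comparisons say
that the surplus `∫_c^b (v - c) f` above a wage `c` decreases in `c` when `f ≥ 0`.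
-/

open MeasureTheory Set intervalIntegral

theorem intervalIntegrable_of_forall_norm_le {E : Type*} [NormedAddCommGroup E] {f : ℝ → E}
    (hf : AEStronglyMeasurable f) {M : ℝ} (hM : ∀ x, ‖f x‖ ≤ M) (a b : ℝ) :
    IntervalIntegrable f volume a b :=
  intervalIntegrable_iff.2 <|
    Measure.integrableOn_of_bounded measure_Ioc_lt_top.ne hf (ae_of_all _ hM)

theorem integral_sub_mul_le_of_le {f : ℝ → ℝ} {c₁ c₂ b : ℝ} (hc : c₁ ≤ c₂) (hcb : c₂ ≤ b)
    (hf0 : ∀ v ∈ Icc c₁ b, 0 ≤ f v) (hf : IntervalIntegrable f volume c₁ b) :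
    ∫ v in c₂..b, (v - c₂) * f v ≤ ∫ v in c₁..b, (v - c₁) * f v := by
  have hint : ∀ c {x y}, x ∈ uIcc c₁ b → y ∈ uIcc c₁ b →
      IntervalIntegrable (fun v => (v - c) * f v) volume x y := fun c x y hx hy =>
    (hf.mono_set (uIcc_subset_uIcc hx hy)).continuousOn_mul
      (continuous_id.sub continuous_const).continuousOn
  have h₁ : c₁ ∈ uIcc c₁ b := left_mem_uIcc
  have h₂ : c₂ ∈ uIcc c₁ b := by rw [uIcc_of_le (hc.trans hcb)]; exact ⟨hc, hcb⟩
  have hb : b ∈ uIcc c₁ b := right_mem_uIcc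
  calc ∫ v in c₂..b, (v - c₂) * f v ≤ ∫ v in c₂..b, (v - c₁) * f v :=
        integral_mono_on hcb (hint _ h₂ hb) (hint _ h₂ hb) fun v hv =>
          mul_le_mul_of_nonneg_right (by linarith) (hf0 v ⟨hc.trans hv.1, hv.2⟩)
    _ ≤ ∫ v in c₁..b, (v - c₁) * f v := by
        rw [← integral_add_adjacent_intervals (hint c₁ h₁ h₂) (hint c₁ h₂ hb)]
        have : 0 ≤ ∫ v in c₁..c₂, (v - c₁) * f v := integral_nonneg hc fun v hv =>
          mul_nonneg (by linarith [hv.1]) (hf0 v ⟨hv.1, hv.2.trans hcb⟩)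
        linarith

theorem integral_sub_ite_mul {f : ℝ → ℝ} {a b c : ℝ} (hac : a ≤ c) (hcb : c ≤ b) :
    ∫ v in a..b, (v - if c ≤ v then v else 0) * f v = ∫ v in a..c, v * f v := by
  have hind : (fun v => (v - if c ≤ v then v else 0) * f v) =
      (Iio c).indicator (fun v => v * f v) := by
    ext v
    by_cases h : c ≤ v <;> simp [h, indicator]
  have hinter : Ioc a b ∩ Iio c = Ioo a c := by
    ext v
    simp only [mem_inter_iff, mem_Ioc, mem_Iio, mem_Ioo]
    grind
  rw [integral_of_le (hac.trans hcb), integral_of_le hac, hind,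
    setIntegral_indicator measurableSet_Iio, hinter, integral_Ioc_eq_integral_Ioo]

theorem csSup_min_le_of_lt {δ ε : ℝ} (hε0 : 0 ≤ ε) (hε1 : ε ≤ 1) (h : ε < δ) :
    sSup {v : ℝ | v ∈ Icc (0:ℝ) 1 ∧ min v δ ≤ ε} = ε := by
  have : {v : ℝ | v ∈ Icc (0:ℝ) 1 ∧ min v δ ≤ ε} = Icc 0 ε := by
    ext v
    simp only [mem_ofPred_eq, mem_Icc]
    grind
  rw [this, csSup_Icc hε0]

theorem csSup_min_le_of_le {δ ε : ℝ} (h : δ ≤ ε) :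
    sSup {v : ℝ | v ∈ Icc (0:ℝ) 1 ∧ min v δ ≤ ε} = 1 := by
  have : {v : ℝ | v ∈ Icc (0:ℝ) 1 ∧ min v δ ≤ ε} = Icc 0 1 := by
    ext v
    simp only [mem_ofPred_eq, and_iff_left_iff_imp]
    exact fun _ => (min_le_right v δ).trans h
  rw [this, csSup_Icc zero_le_one]

theorem csSup_ite_le {δ' ε : ℝ} (hε0 : 0 ≤ ε) (hε1 : ε ≤ 1) (hδ' : δ' ≤ 1) :
    sSup {v : ℝ | v ∈ Icc (0:ℝ) 1 ∧ (if δ' ≤ v then v else 0) ≤ ε} = max ε δ' := by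
  rcases lt_or_ge ε δ' with h | h
  · have : {v : ℝ | v ∈ Icc (0:ℝ) 1 ∧ (if δ' ≤ v then v else 0) ≤ ε} = Ico 0 δ' := by
      ext v
      simp only [mem_ofPred_eq, mem_Icc, mem_Ico]
      grind
    rw [this, csSup_Ico (hε0.trans_lt h), max_eq_right h.le]
  · have : {v : ℝ | v ∈ Icc (0:ℝ) 1 ∧ (if δ' ≤ v then v else 0) ≤ ε} = Icc 0 ε := by
      ext v
      simp only [mem_ofPred_eq, mem_Icc]
      grind
    rw [this, csSup_Icc hε0, max_eq_left h]

theorem stmt11_general (β δ δ' MA MB : ℝ) (hβ : 1 ≤ β)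
    (hδ' : δ' ∈ Set.Icc (0:ℝ) 1) (hδδ : δ' ≤ δ)
    (fA fB : ℝ → ℝ) (hmA : Measurable fA) (hmB : Measurable fB)
    (hA0 : ∀ v, 0 ≤ fA v) (hB0 : ∀ v, 0 ≤ fB v)
    (hAu : ∀ v, fA v ≤ MA) (hBu : ∀ v, fB v ≤ MB)
    (w₁ w₂ w₁inv w₂inv : ℝ → ℝ)
    (hw1 : ∀ v, w₁ v = min v δ)
    (hw2 : ∀ v, w₂ v = if δ' ≤ v then v else 0)
    (hinv1 : ∀ ε, w₁inv ε = sSup {v : ℝ | v ∈ Set.Icc (0:ℝ) 1 ∧ w₁ v ≤ ε})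
    (hinv2 : ∀ ε, w₂inv ε = sSup {v : ℝ | v ∈ Set.Icc (0:ℝ) 1 ∧ w₂ v ≤ ε})
    (heqprofit : β * ∫ v in δ..1, (v - δ) * fA v = ∫ v in (0:ℝ)..δ', v * fB v) :
    ∀ ε ∈ Set.Icc (0:ℝ) 1,
      β * (∫ v in ε..(w₁inv ε), (v - ε) * fA v)
          + (∫ v in ε..(w₂inv ε), (v - ε) * fB v)
        ≤ ∫ v in (0:ℝ)..1, (v - w₂ v) * fB v := by
  rintro ε ⟨hε0, hε1⟩
  have hfA : IntervalIntegrable fA volume δ 1 := intervalIntegrable_of_forall_norm_le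
    hmA.aestronglyMeasurable (fun v => (Real.norm_of_nonneg (hA0 v)).trans_le (hAu v)) _ _
  have hfB : IntervalIntegrable fB volume 0 δ' := intervalIntegrable_of_forall_norm_le
    hmB.aestronglyMeasurable (fun v => (Real.norm_of_nonneg (hB0 v)).trans_le (hBu v)) _ _
  simp only [hw1] at hinv1
  simp only [hw2] at hinv2 ⊢
  rw [integral_sub_ite_mul hδ'.1 hδ'.2, hinv1, hinv2, csSup_ite_le hε0 hε1 hδ'.2]
  rcases lt_or_ge ε δ with hεδ | hδε
  · rw [csSup_min_le_of_lt hε0 hε1 hεδ, integral_same, mul_zero, zero_add]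
    rcases le_total ε δ' with hεδ' | hδ'ε
    · rw [max_eq_right hεδ']
      simpa using integral_sub_mul_le_of_le hε0 hεδ' (fun v _ => hB0 v) hfB
    · rw [max_eq_left hδ'ε, integral_same]
      exact integral_nonneg hδ'.1 fun v hv => mul_nonneg hv.1 (hB0 v)
  · rw [csSup_min_le_of_le hδε, max_eq_left (hδδ.trans hδε), integral_same, add_zero,
      ← heqprofit]
    exact mul_le_mul_of_nonneg_left
      (integral_sub_mul_le_of_le hδε hε1 (fun v _ => hA0 v) hfA) (by linarith)

/-- The parameterized wage profiles `w₁(v) = min(v,δ)`, `w₂(v) = v·𝟙[v ≥ δ']` with `δ ≥ δ'`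
and equal profits satisfy the No Desegregation Condition: for every common wage `ε ∈ [0,1]`,
the desegregation profit is at most firm 2's profit. -/
theorem stmt11 (β δ δ' MA MB : ℝ) (hβ : 1 ≤ β)
    (hδ : δ ∈ Set.Icc (0:ℝ) 1) (hδ' : δ' ∈ Set.Icc (0:ℝ) 1) (hδδ : δ' ≤ δ)
    (fA fB : ℝ → ℝ) (hmA : Measurable fA) (hmB : Measurable fB)
    (hA0 : ∀ v, 0 ≤ fA v) (hB0 : ∀ v, 0 ≤ fB v)
    (hAu : ∀ v, fA v ≤ MA) (hBu : ∀ v, fB v ≤ MB)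
    (w₁ w₂ w₁inv w₂inv : ℝ → ℝ)
    (hw1 : ∀ v, w₁ v = min v δ)
    (hw2 : ∀ v, w₂ v = if δ' ≤ v then v else 0)
    (hinv1 : ∀ ε, w₁inv ε = sSup {v : ℝ | v ∈ Set.Icc (0:ℝ) 1 ∧ w₁ v ≤ ε})
    (hinv2 : ∀ ε, w₂inv ε = sSup {v : ℝ | v ∈ Set.Icc (0:ℝ) 1 ∧ w₂ v ≤ ε})
    (heqprofit : β * ∫ v in δ..1, (v - δ) * fA v = ∫ v in (0:ℝ)..δ', v * fB v) :
    ∀ ε ∈ Set.Icc (0:ℝ) 1,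
      β * (∫ v in ε..(w₁inv ε), (v - ε) * fA v)
          + (∫ v in ε..(w₂inv ε), (v - ε) * fB v)
        ≤ ∫ v in (0:ℝ)..1, (v - w₂ v) * fB v :=
  stmt11_general β δ δ' MA MB hβ hδ' hδδ fA fB hmA hmB hA0 hB0 hAu hBu w₁ w₂ w₁inv w₂inv hw1 hw2
    hinv1 hinv2 heqprofit
end

section
/- Let f be a density on [0,1] with 0 < f_lower ≤ f(v) ≤ f_upper < ∞ and fix w₁, w₂ with 0 ≤ w₁ < w₂ ≤ 1 satisfying the equal profit condition ∫_{w₁}^{w₂}(v−w₁)f(v)dv = ∫_{w₂}^1(v−w₂)f(v)dv and the no-block condition ∫_{w₁}^{w₂}(v−w₁)f(v)dv ≥ ∫_0^{w₁} v f(v)dv. Then for every common deviation wage w ∈ [0,1]: (a) if w < w₁ then ∫_w^{w₁}(v−w)f(v)dv ≤ ∫_{w₁}^{w₂}(v−w₁)f(v)dv; (b) if w₁ ≤ w < w₂ then ∫_w^{w₂}(v−w)f(v)dv ≤ ∫_{w₁}^{w₂}(v−w₁)f(v)dv; (c) if w ≥ w₂ then ∫_w^1(v−w)f(v)dv ≤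 ∫_{w₂}^1(v−w₂)f(v)dv. -/
open MeasureTheory Set intervalIntegral

/-- Lowering the wage raises the margin on every hired worker and enlarges the pool of hired
workers. -/
theorem antitoneOn_integral_sub_mul {f : ℝ → ℝ} {a b : ℝ} (hf : IntegrableOn f (Icc a b))
    (hf0 : ∀ v ∈ Icc a b, 0 ≤ f v) :
    AntitoneOn (fun w => ∫ v in w..b, (v - w) * f v) (Icc a b) := by
  have hint : ∀ c, ∀ z ∈ Icc a b, IntervalIntegrable (fun v => (v - c) * f v) volume z b :=
    fun c z hz => (intervalIntegrable_iff_integrableOn_Icc_of_le hz.2).2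
      ((hf.continuousOn_mul (by fun_prop) isCompact_Icc).mono_set (Icc_subset_Icc hz.1 le_rfl))
  intro x hx y hy hxy
  calc (∫ v in y..b, (v - y) * f v)
      ≤ ∫ v in y..b, (v - x) * f v :=
        integral_mono_on hy.2 (hint y y hy) (hint x y hy) fun v hv =>
          mul_le_mul_of_nonneg_right (by linarith) (hf0 v ⟨hy.1.trans hv.1, hv.2⟩)
    _ ≤ ∫ v in x..b, (v - x) * f v := by
        refine integral_mono_interval hxy hy.2 le_rfl ?_ (hint x x hx)
        filter_upwards [ae_restrict_mem measurableSet_Ioc] with v hv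
        exact mul_nonneg (by linarith [hv.1]) (hf0 v ⟨hx.1.trans hv.1.le, hv.2⟩)

theorem stmt13_general (flower fupper : ℝ) (hfl : 0 < flower)
    (f : ℝ → ℝ) (hm : Measurable f)
    (hlb : ∀ v ∈ Set.Icc (0:ℝ) 1, flower ≤ f v)
    (hub : ∀ v ∈ Set.Icc (0:ℝ) 1, f v ≤ fupper)
    (w₁ w₂ : ℝ) (h0 : 0 ≤ w₁) (h12 : w₁ < w₂) (h21 : w₂ ≤ 1)
    (hnoblock : (∫ v in (0:ℝ)..w₁, v * f v) ≤ ∫ v in w₁..w₂, (v - w₁) * f v) :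
    ∀ w ∈ Set.Icc (0:ℝ) 1,
      (w < w₁ → (∫ v in w..w₁, (v - w) * f v) ≤ ∫ v in w₁..w₂, (v - w₁) * f v) ∧
      (w₁ ≤ w → w < w₂ →
        (∫ v in w..w₂, (v - w) * f v) ≤ ∫ v in w₁..w₂, (v - w₁) * f v) ∧
      (w₂ ≤ w → (∫ v in w..1, (v - w) * f v) ≤ ∫ v in w₂..1, (v - w₂) * f v) := by
  have hf0 : ∀ v ∈ Icc (0:ℝ) 1, 0 ≤ f v := fun v hv => hfl.le.trans (hlb v hv)
  have hf : IntegrableOn f (Icc 0 1) :=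
    Measure.integrableOn_of_bounded (M := fupper) measure_Icc_lt_top.ne hm.aestronglyMeasurable
      (by
        filter_upwards [ae_restrict_mem measurableSet_Icc] with v hv
        rw [Real.norm_of_nonneg (hf0 v hv)]
        exact hub v hv)
  have hanti : ∀ a b : ℝ, 0 ≤ a → b ≤ 1 →
      AntitoneOn (fun w => ∫ v in w..b, (v - w) * f v) (Icc a b) := fun a b ha hb =>
    antitoneOn_integral_sub_mul (hf.mono_set (Icc_subset_Icc ha hb))
      fun v hv => hf0 v ⟨ha.trans hv.1, hv.2.trans hb⟩
  intro w hw
  refine ⟨fun hw₁ => ?_, fun hw₁ hw₂ => ?_, fun hw₂ => ?_⟩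
  · have hle := hanti 0 w₁ le_rfl (by linarith) ⟨le_rfl, h0⟩ ⟨hw.1, hw₁.le⟩ hw.1
    simp only [sub_zero] at hle
    exact hle.trans hnoblock
  · exact hanti w₁ w₂ h0 h21 ⟨le_rfl, h12.le⟩ ⟨hw₁, hw₂.le⟩ hw₁
  · exact hanti w₂ 1 (by linarith) le_rfl ⟨le_rfl, h21⟩ ⟨hw₂, hw.2⟩ hw₂

/-- Deviation-profit bounds under non-group-based EPSW: given the equal-profit and no-block
conditions for equilibrium wages `w₁ < w₂`, no common deviation wage `w ∈ [0,1]` yields a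
profit exceeding the equilibrium profit, in each of the three wage regions. -/
theorem stmt13 (flower fupper : ℝ) (hfl : 0 < flower)
    (f : ℝ → ℝ) (hm : Measurable f)
    (hlb : ∀ v ∈ Set.Icc (0:ℝ) 1, flower ≤ f v)
    (hub : ∀ v ∈ Set.Icc (0:ℝ) 1, f v ≤ fupper)
    (w₁ w₂ : ℝ) (h0 : 0 ≤ w₁) (h12 : w₁ < w₂) (h21 : w₂ ≤ 1)
    (heqprofit : (∫ v in w₁..w₂, (v - w₁) * f v) = ∫ v in w₂..1, (v - w₂) * f v)
    (hnoblock : (∫ v in (0:ℝ)..w₁, v * f v) ≤ ∫ v in w₁..w₂, (v - w₁) * f v) :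
    ∀ w ∈ Set.Icc (0:ℝ) 1,
      (w < w₁ → (∫ v in w..w₁, (v - w) * f v) ≤ ∫ v in w₁..w₂, (v - w₁) * f v) ∧
      (w₁ ≤ w → w < w₂ →
        (∫ v in w..w₂, (v - w) * f v) ≤ ∫ v in w₁..w₂, (v - w₁) * f v) ∧
      (w₂ ≤ w → (∫ v in w..1, (v - w) * f v) ≤ ∫ v in w₂..1, (v - w₂) * f v) :=
  stmt13_general flower fupper hfl f hm hlb hub w₁ w₂ h0 h12 h21 hnoblock
end

section
/- Let φ : [0,1] → [0,1] satisfy: for every ε, φ(ε) is the supremum of ṽ such that β∫_ε^ṽ(v−ε)f_A dv + ∫_ε^{w₂⁻¹(ε)}(v−ε)f_B dv ≤ K, where K = ∫_0^1(v−w₂(v))f_B dv, f_A, f_B are densities bounded above and below by positive constants, and w₂⁻¹ is the generalized inverse of a nondecreasing w₂ with w₂(v) ≤ v. Then φ has no upward jump: there is no ε and δ > 0 such that for all η > 0 there exists ε' ∈ (ε, ε+η) with φ(ε') > φ(ε) + δ, nor ε' ∈ (ε−η, ε) with φ(ε) > φ(ε') + δ. -/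
/-!
`φ(ε)` is the supremum of the sublevel set `{u ∈ [ε,1] | F(ε,u) ≤ K}` of the left-hand side `F`
of the defining condition. Lowering the base point from `ε` to `ε'` raises `F` by at most
`L (ε - ε')`, because the integrands `(v - ε) f` and the limit `w₂⁻¹` move monotonically and the
densities are bounded by `f_upper`; lowering the upper limit from `b` to `a` lowers `F` by at least
`β f_lower (a - ε') (b - a)`. So if `φ(ε) > φ(ε') + δ` with `ε - ε'` small, the point
`φ(ε') + δ/2` would still satisfy the condition at `ε'`. This one-sided estimate, uniform in `ε`,
excludes upward jumps from either side.
-/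

open MeasureTheory Set intervalIntegral

section Integrals

variable {f : ℝ → ℝ} {m M : ℝ}

lemma integrableOn_Icc_of_le_of_le {a b : ℝ} (hf : Measurable f)
    (hm : ∀ v ∈ Icc a b, m ≤ f v) (hM : ∀ v ∈ Icc a b, f v ≤ M) :
    IntegrableOn f (Icc a b) :=
  Measure.integrableOn_of_bounded measure_Icc_lt_top.ne hf.aestronglyMeasurable
    ((ae_restrict_iff' measurableSet_Icc).mpr
      (ae_of_all _ fun v hv => abs_le_max_abs_abs (hm v hv) (hM v hv)))

lemma intervalIntegrable_sub_mul (hf : IntegrableOn f (Icc 0 1)) (c : ℝ) {a b : ℝ}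
    (ha : a ∈ Icc (0 : ℝ) 1) (hb : b ∈ Icc (0 : ℝ) 1) :
    IntervalIntegrable (fun v => (v - c) * f v) volume a b :=
  ((hf.continuousOn_mul (by fun_prop) isCompact_Icc).mono_set
    (uIcc_subset_Icc ha hb)).intervalIntegrable

lemma integrableOn_sub_mul_of_monotoneOn {w : ℝ → ℝ} (hf : IntegrableOn f (Icc 0 1))
    (hw : MonotoneOn w (Icc 0 1)) (hwle : ∀ v ∈ Icc (0 : ℝ) 1, w v ∈ Icc 0 v) :
    IntegrableOn (fun v => (v - w v) * f v) (Icc 0 1) :=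
  hf.bdd_mul (c := 1)
    (aemeasurable_id.sub
      (aemeasurable_restrict_of_monotoneOn measurableSet_Icc hw)).aestronglyMeasurable
    ((ae_restrict_iff' measurableSet_Icc).mpr (ae_of_all _ fun v hv => by
      have := hwle v hv
      rw [Real.norm_eq_abs, abs_le]
      constructor <;> linarith [hv.1, hv.2, this.1, this.2]))

lemma integral_sub_mul_add_le (hf : IntegrableOn f (Icc 0 1)) (hm0 : 0 ≤ m)
    (hm : ∀ v ∈ Icc (0 : ℝ) 1, m ≤ f v) {c a b : ℝ}
    (hc : 0 ≤ c) (hca : c ≤ a) (hab : a ≤ b) (hb : b ≤ 1) :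
    (∫ v in c..a, (v - c) * f v) + m * ((a - c) * (b - a)) ≤ ∫ v in c..b, (v - c) * f v := by
  have hcI : c ∈ Icc (0 : ℝ) 1 := ⟨hc, hca.trans (hab.trans hb)⟩
  have haI : a ∈ Icc (0 : ℝ) 1 := ⟨hc.trans hca, hab.trans hb⟩
  have hbI : b ∈ Icc (0 : ℝ) 1 := ⟨hc.trans (hca.trans hab), hb⟩
  have hgain : m * ((a - c) * (b - a)) ≤ ∫ v in a..b, (v - c) * f v := by
    have h := integral_mono_on (f := fun _ => (a - c) * m) hab intervalIntegrable_const
      (intervalIntegrable_sub_mul hf c haI hbI)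
      fun v hv => mul_le_mul (by linarith [hv.1]) (hm v ⟨by linarith [hv.1], hv.2.trans hb⟩)
        hm0 (by linarith [hv.1])
    rw [intervalIntegral.integral_const, smul_eq_mul] at h
    linarith
  rw [← integral_add_adjacent_intervals (intervalIntegrable_sub_mul hf c hcI haI)
    (intervalIntegrable_sub_mul hf c haI hbI)]
  linarith

lemma integral_sub_mul_le_add (hf : IntegrableOn f (Icc 0 1)) (hM0 : 0 ≤ M)
    (hM : ∀ v ∈ Icc (0 : ℝ) 1, f v ≤ M) {ε' ε u : ℝ}
    (h0 : 0 ≤ ε') (hε' : ε' ≤ ε) (hε : ε ≤ u) (hu : u ≤ 1) :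
    ∫ v in ε'..u, (v - ε') * f v ≤ (∫ v in ε..u, (v - ε) * f v) + M * (ε - ε') := by
  have mem : ∀ v ∈ Icc ε' u, v ∈ Icc (0 : ℝ) 1 := fun v hv => ⟨h0.trans hv.1, hv.2.trans hu⟩
  have hε'I : ε' ∈ Icc (0 : ℝ) 1 := mem ε' ⟨le_rfl, hε'.trans hε⟩
  have hεI : ε ∈ Icc (0 : ℝ) 1 := mem ε ⟨hε', hε⟩
  have huI : u ∈ Icc (0 : ℝ) 1 := mem u ⟨hε'.trans hε, le_rfl⟩
  have hlow : ∫ v in ε'..ε, (v - ε') * f v ≤ (ε - ε') * ((ε - ε') * M) := by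
    have h := integral_mono_on (g := fun _ => (ε - ε') * M) hε'
      (intervalIntegrable_sub_mul hf ε' hε'I hεI)
      intervalIntegrable_const fun v hv =>
        (mul_le_mul_of_nonneg_left (hM v (mem v ⟨hv.1, hv.2.trans hε⟩))
          (by linarith [hv.1])).trans (mul_le_mul_of_nonneg_right (by linarith [hv.2]) hM0)
    rwa [intervalIntegral.integral_const, smul_eq_mul] at h
  have hhigh : ∫ v in ε..u, (v - ε') * f v
      ≤ (∫ v in ε..u, (v - ε) * f v) + (u - ε) * ((ε - ε') * M) := by
    have h := integral_mono_on hε (intervalIntegrable_sub_mul hf ε' hεI huI)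
      ((intervalIntegrable_sub_mul hf ε hεI huI).add intervalIntegrable_const)
      (g := fun v => (v - ε) * f v + (ε - ε') * M) fun v hv => by
        have := mul_le_mul_of_nonneg_left (hM v (mem v ⟨hε'.trans hv.1, hv.2⟩))
          (sub_nonneg.mpr hε')
        linarith
    rwa [integral_add (intervalIntegrable_sub_mul hf ε hεI huI) intervalIntegrable_const,
      intervalIntegral.integral_const, smul_eq_mul] at h
  have hlen : (ε - ε') * M * (u - ε') ≤ (ε - ε') * M :=
    mul_le_of_le_one_right (mul_nonneg (sub_nonneg.mpr hε') hM0) (by linarith)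
  rw [← integral_add_adjacent_intervals (intervalIntegrable_sub_mul hf ε' hε'I hεI)
    (intervalIntegrable_sub_mul hf ε' hεI huI)]
  nlinarith

end Integrals

noncomputable def genInv (w : ℝ → ℝ) (ε : ℝ) : ℝ :=
  sSup {v : ℝ | v ∈ Icc (0 : ℝ) 1 ∧ w v ≤ ε}

section GenInv

variable {w : ℝ → ℝ} {ε : ℝ}

lemma genInv_nonneg (w : ℝ → ℝ) (ε : ℝ) : 0 ≤ genInv w ε :=
  Real.sSup_nonneg fun _ hv => hv.1.1

lemma genInv_le_one (w : ℝ → ℝ) (ε : ℝ) : genInv w ε ≤ 1 :=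
  Real.sSup_le (fun _ hv => hv.1.2) zero_le_one

lemma monotone_genInv (w : ℝ → ℝ) : Monotone (genInv w) := by
  intro ε' ε h
  rcases eq_empty_or_nonempty {v : ℝ | v ∈ Icc (0 : ℝ) 1 ∧ w v ≤ ε'} with he | hne
  · rw [genInv, he, Real.sSup_empty]
    exact genInv_nonneg w ε
  · exact csSup_le_csSup ⟨1, fun _ hv => hv.1.2⟩ hne fun v hv => ⟨hv.1, hv.2.trans h⟩

lemma le_genInv (hε : ε ∈ Icc (0 : ℝ) 1) (hw : w ε ≤ ε) : ε ≤ genInv w ε :=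
  le_csSup ⟨1, fun _ hv => hv.1.2⟩ ⟨hε, hw⟩

lemma le_of_lt_genInv (hw : MonotoneOn w (Icc 0 1)) {v : ℝ} (hv : v ∈ Icc (0 : ℝ) 1)
    (hlt : v < genInv w ε) : w v ≤ ε := by
  rcases eq_empty_or_nonempty {v : ℝ | v ∈ Icc (0 : ℝ) 1 ∧ w v ≤ ε} with he | hne
  · rw [genInv, he, Real.sSup_empty] at hlt
    exact absurd hv.1 hlt.not_ge
  · obtain ⟨v₀, ⟨hv₀, hwv₀⟩, hvv₀⟩ := exists_lt_of_lt_csSup hne hlt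
    exact (hw hv hv₀ hvv₀.le).trans hwv₀

/-- On `[ε, w⁻¹(ε))` one has `w ≤ ε`, so the integrand `v - ε` is dominated by `v - w v ≥ 0`. -/
lemma integral_sub_mul_genInv_le {f : ℝ → ℝ} (hf : IntegrableOn f (Icc 0 1))
    (hf0 : ∀ v ∈ Icc (0 : ℝ) 1, 0 ≤ f v) (hw : MonotoneOn w (Icc 0 1))
    (hwle : ∀ v ∈ Icc (0 : ℝ) 1, w v ∈ Icc 0 v) (hε : ε ∈ Icc (0 : ℝ) 1) :
    ∫ v in ε..genInv w ε, (v - ε) * f v ≤ ∫ v in (0 : ℝ)..1, (v - w v) * f v := by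
  have hεW : ε ≤ genInv w ε := le_genInv hε (hwle ε hε).2
  have hWI : genInv w ε ∈ Icc (0 : ℝ) 1 := ⟨genInv_nonneg w ε, genInv_le_one w ε⟩
  have hg := integrableOn_sub_mul_of_monotoneOn hf hw hwle
  have hgW : IntervalIntegrable (fun v => (v - w v) * f v) volume ε (genInv w ε) :=
    (hg.mono_set (uIcc_subset_Icc hε hWI)).intervalIntegrable
  calc ∫ v in ε..genInv w ε, (v - ε) * f v
      ≤ ∫ v in ε..genInv w ε, (v - w v) * f v :=
        integral_mono_on_of_le_Ioo hεW (intervalIntegrable_sub_mul hf ε hε hWI) hgW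
          fun v hv => by
            have hvI : v ∈ Icc (0 : ℝ) 1 := ⟨hε.1.trans hv.1.le, hv.2.le.trans hWI.2⟩
            exact mul_le_mul_of_nonneg_right
              (by linarith [le_of_lt_genInv hw hvI hv.2]) (hf0 v hvI)
    _ ≤ ∫ v in (0 : ℝ)..1, (v - w v) * f v :=
        integral_mono_interval hε.1 hεW hWI.2
          ((ae_restrict_iff' measurableSet_Ioc).mpr (ae_of_all _ fun v hv =>
            mul_nonneg (by linarith [(hwle v ⟨hv.1.le, hv.2⟩).2]) (hf0 v ⟨hv.1.le, hv.2⟩)))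
          (hg.mono_set (uIcc_of_le zero_le_one).le).intervalIntegrable

end GenInv

noncomputable def sublevelSup (F : ℝ → ℝ → ℝ) (K ε : ℝ) : ℝ :=
  sSup {u : ℝ | u ∈ Icc ε 1 ∧ F ε u ≤ K}

section Sublevel

variable {F : ℝ → ℝ → ℝ} {K c L : ℝ}

lemma le_sublevelSup {ε u : ℝ} (hu : u ∈ Icc ε 1) (hF : F ε u ≤ K) : u ≤ sublevelSup F K ε :=
  le_csSup ⟨1, fun _ hv => hv.1.2⟩ ⟨hu, hF⟩

lemma sublevelSup_le_add (hc : 0 ≤ c) (hself : ∀ ε ∈ Icc (0 : ℝ) 1, F ε ε ≤ K)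
    (hshift : ∀ ε' ε a b : ℝ, 0 ≤ ε' → ε' ≤ ε → ε ≤ a → a ≤ b → b ≤ 1 →
      F ε' a + c * ((a - ε') * (b - a)) ≤ F ε b + L * (ε - ε'))
    {δ ε' ε : ℝ} (hδ : 0 < δ) (hε' : ε' ∈ Icc (0 : ℝ) 1) (hε : ε ∈ Icc (0 : ℝ) 1)
    (hle : ε' ≤ ε) (hclose : ε - ε' ≤ δ / 2) (hcost : L * (ε - ε') ≤ c * (δ / 2) ^ 2) :
    sublevelSup F K ε ≤ sublevelSup F K ε' + δ := by
  have hε'φ : ε' ≤ sublevelSup F K ε' := le_sublevelSup ⟨le_rfl, hε'.2⟩ (hself ε' hε')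
  refine csSup_le ⟨ε, ⟨le_rfl, hε.2⟩, hself ε hε⟩ fun b ⟨hb, hFb⟩ => ?_
  by_contra! hlt
  set a := sublevelSup F K ε' + δ / 2 with ha
  have hgain : c * (δ / 2) ^ 2 ≤ c * ((a - ε') * (b - a)) :=
    mul_le_mul_of_nonneg_left (by rw [sq]; gcongr <;> linarith) hc
  have hFa := hshift ε' ε a b hε'.1 hle (by linarith) (by linarith) hb.2
  have := le_sublevelSup (F := F) (K := K) (⟨by linarith, by linarith [hb.2]⟩ : a ∈ Icc ε' 1)
    (by linarith)
  linarith

lemma exists_pos_sublevelSup_le_add (hc : 0 < c) (hL : 0 < L)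
    (hself : ∀ ε ∈ Icc (0 : ℝ) 1, F ε ε ≤ K)
    (hshift : ∀ ε' ε a b : ℝ, 0 ≤ ε' → ε' ≤ ε → ε ≤ a → a ≤ b → b ≤ 1 →
      F ε' a + c * ((a - ε') * (b - a)) ≤ F ε b + L * (ε - ε'))
    {δ : ℝ} (hδ : 0 < δ) :
    ∃ η > 0, ∀ ε' ∈ Icc (0 : ℝ) 1, ∀ ε ∈ Icc (0 : ℝ) 1, ε' ≤ ε → ε - ε' < η →
      sublevelSup F K ε ≤ sublevelSup F K ε' + δ := by
  refine ⟨min (δ / 2) (c * (δ / 2) ^ 2 / L), by positivity, fun ε' hε' ε hε hle hη => ?_⟩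
  refine sublevelSup_le_add hc.le hself hshift hδ hε' hε hle
    (hη.le.trans (min_le_left _ _)) ?_
  exact (le_div_iff₀' hL).mp (hη.le.trans (min_le_right _ _))

end Sublevel

lemma not_upward_jump_of_forall_le_add {φ : ℝ → ℝ}
    (h : ∀ δ > 0, ∃ η > 0, ∀ ε' ∈ Icc (0 : ℝ) 1, ∀ ε ∈ Icc (0 : ℝ) 1, ε' ≤ ε → ε - ε' < η →
      φ ε ≤ φ ε' + δ) :
    ∀ x ∈ Icc (0 : ℝ) 1,
      ¬ (∃ δ > 0, ∀ η > 0, ∃ x' ∈ Ioo (x - η) x ∩ Icc (0 : ℝ) 1, φ x' + δ < φ x) ∧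
      ¬ (∃ δ > 0, ∀ η > 0, ∃ x' ∈ Ioo x (x + η) ∩ Icc (0 : ℝ) 1, φ x + δ < φ x') := by
  intro x hx
  constructor
  · rintro ⟨δ, hδ, hjump⟩
    obtain ⟨η, hη, hle⟩ := h δ hδ
    obtain ⟨x', ⟨⟨hx'η, hx'x⟩, hx'⟩, hlt⟩ := hjump η hη
    exact (hle x' hx' x hx hx'x.le (by linarith)).not_gt hlt
  · rintro ⟨δ, hδ, hjump⟩
    obtain ⟨η, hη, hle⟩ := h δ hδ
    obtain ⟨x', ⟨⟨hxx', hx'η⟩, hx'⟩, hlt⟩ := hjump η hη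
    exact (hle x hx x' hx' hxx'.le (by linarith)).not_gt hlt

/-- Left-hand side of the No Desegregation Condition. -/
noncomputable def ndcLhs (β : ℝ) (fA fB w : ℝ → ℝ) (ε u : ℝ) : ℝ :=
  β * (∫ v in ε..u, (v - ε) * fA v) + ∫ v in ε..genInv w ε, (v - ε) * fB v

lemma ndcLhs_add_le {β m M : ℝ} {fA fB w : ℝ → ℝ} (hβ : 0 ≤ β) (hm0 : 0 ≤ m) (hM0 : 0 ≤ M)
    (hA : IntegrableOn fA (Icc 0 1)) (hAl : ∀ v ∈ Icc (0 : ℝ) 1, m ≤ fA v)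
    (hAu : ∀ v ∈ Icc (0 : ℝ) 1, fA v ≤ M)
    (hB : IntegrableOn fB (Icc 0 1)) (hBl : ∀ v ∈ Icc (0 : ℝ) 1, 0 ≤ fB v)
    (hBu : ∀ v ∈ Icc (0 : ℝ) 1, fB v ≤ M) (hwle : ∀ v ∈ Icc (0 : ℝ) 1, w v ≤ v)
    {ε' ε a b : ℝ} (h0 : 0 ≤ ε') (hε' : ε' ≤ ε) (hεa : ε ≤ a) (hab : a ≤ b) (hb : b ≤ 1) :
    ndcLhs β fA fB w ε' a + β * m * ((a - ε') * (b - a))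
      ≤ ndcLhs β fA fB w ε b + (β + 1) * M * (ε - ε') := by
  have hε1 : ε ≤ 1 := hεa.trans (hab.trans hb)
  have hεW : ε ≤ genInv w ε := le_genInv ⟨h0.trans hε', hε1⟩ (hwle ε ⟨h0.trans hε', hε1⟩)
  have hε'W : ε' ≤ genInv w ε' := le_genInv ⟨h0, hε'.trans hε1⟩ (hwle ε' ⟨h0, hε'.trans hε1⟩)
  have hA' : (∫ v in ε'..a, (v - ε') * fA v) + m * ((a - ε') * (b - a))
      ≤ (∫ v in ε..b, (v - ε) * fA v) + M * (ε - ε') :=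
    (integral_sub_mul_add_le hA hm0 hAl h0 (hε'.trans hεa) hab hb).trans
      (integral_sub_mul_le_add hA hM0 hAu h0 hε' (hεa.trans hab) hb)
  have hB' : ∫ v in ε'..genInv w ε', (v - ε') * fB v
      ≤ (∫ v in ε..genInv w ε, (v - ε) * fB v) + M * (ε - ε') := by
    have hmono := integral_sub_mul_add_le hB le_rfl hBl h0 hε'W
      (monotone_genInv w hε') (genInv_le_one w ε)
    have hshift := integral_sub_mul_le_add hB hM0 hBu h0 hε' hεW (genInv_le_one w ε)
    linarith
  have := mul_le_mul_of_nonneg_left hA' hβ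
  unfold ndcLhs
  linarith

/-- Upward continuity of `φ` (Claim 2 of Lemma 2): the function `φ` defined via the
No Desegregation Condition has no upward jumps on `[0,1]`. -/
theorem stmt15 (β flower fupper : ℝ) (hβ : 1 ≤ β) (hfl : 0 < flower)
    (fA fB : ℝ → ℝ) (hmA : Measurable fA) (hmB : Measurable fB)
    (hAl : ∀ v ∈ Set.Icc (0:ℝ) 1, flower ≤ fA v)
    (hAu : ∀ v ∈ Set.Icc (0:ℝ) 1, fA v ≤ fupper)
    (hBl : ∀ v ∈ Set.Icc (0:ℝ) 1, flower ≤ fB v)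
    (hBu : ∀ v ∈ Set.Icc (0:ℝ) 1, fB v ≤ fupper)
    (w₂ w₂inv : ℝ → ℝ) (hw₂mono : MonotoneOn w₂ (Set.Icc 0 1))
    (hw₂le : ∀ v ∈ Set.Icc (0:ℝ) 1, w₂ v ∈ Set.Icc 0 v)
    (hinv : ∀ ε, w₂inv ε = sSup {v : ℝ | v ∈ Set.Icc (0:ℝ) 1 ∧ w₂ v ≤ ε})
    (K : ℝ) (hK : K = ∫ v in (0:ℝ)..1, (v - w₂ v) * fB v)
    (φ : ℝ → ℝ)
    (hφ : ∀ ε, φ ε = sSup {u : ℝ | u ∈ Set.Icc ε 1 ∧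
        β * (∫ v in ε..u, (v - ε) * fA v)
          + (∫ v in ε..(w₂inv ε), (v - ε) * fB v) ≤ K}) :
    ∀ x ∈ Set.Icc (0:ℝ) 1,
      ¬ (∃ δ > 0, ∀ η > 0, ∃ x' ∈ Set.Ioo (x - η) x ∩ Set.Icc (0:ℝ) 1,
            φ x' + δ < φ x) ∧
      ¬ (∃ δ > 0, ∀ η > 0, ∃ x' ∈ Set.Ioo x (x + η) ∩ Set.Icc (0:ℝ) 1,
            φ x + δ < φ x') := by
  obtain rfl : w₂inv = genInv w₂ := funext hinv
  obtain rfl : φ = sublevelSup (ndcLhs β fA fB w₂) K := funext hφ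
  have hM : 0 < fupper :=
    hfl.trans_le ((hAl 0 ⟨le_rfl, zero_le_one⟩).trans (hAu 0 ⟨le_rfl, zero_le_one⟩))
  have hA := integrableOn_Icc_of_le_of_le hmA hAl hAu
  have hB := integrableOn_Icc_of_le_of_le hmB hBl hBu
  have hB0 : ∀ v ∈ Icc (0 : ℝ) 1, 0 ≤ fB v := fun v hv => hfl.le.trans (hBl v hv)
  have hβ0 : 0 < β := zero_lt_one.trans_le hβ
  refine not_upward_jump_of_forall_le_add fun δ hδ =>
    exists_pos_sublevelSup_le_add (c := β * flower) (L := (β + 1) * fupper)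
      (by positivity) (by positivity) (fun ε hε => ?_)
      (fun ε' ε a b => ndcLhs_add_le (by positivity) hfl.le hM.le hA hAl hAu hB hB0 hBu
        fun v hv => (hw₂le v hv).2) hδ
  rw [ndcLhs, integral_same, mul_zero, zero_add, hK]
  exact integral_sub_mul_genInv_le hB hB0 hw₂mono hw₂le hε
end

section
/- Let φ : [0,1] → [0,1] be upward continuous (no upward jumps) and define ŵ(v) = sup{ε : φ(ε) ≤ v} (with ŵ(v)=0 if the set is empty) and ŵ⁻¹(ε) = sup{v : ŵ(v) ≤ ε} (with value 0 if empty). Then ŵ is nondecreasing and φ(ε) ≥ ŵ⁻¹(ε) for every ε ∈ [0,1]. -/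
/-!
If `v > φ ε` had `ŵ v ≤ ε`, then, since `φ` cannot jump up by `v - φ ε` just to the right
of `ε`, there would be points `x > ε` with `φ x ≤ v`, forcing `ŵ v ≥ x > ε`. At `ε = 1` there
is no room to the right, and `φ 1 ≥ 1 ≥ v` is used instead.
-/

open Set

theorem Real.sSup_mono_of_nonneg {A B : Set ℝ} (hB : BddAbove B) (hB0 : ∀ x ∈ B, 0 ≤ x)
    (hAB : A ⊆ B) : sSup A ≤ sSup B := by
  rcases A.eq_empty_or_nonempty with rfl | hA
  · exact Real.sSup_empty.trans_le (Real.sSup_nonneg hB0)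
  · exact csSup_le_csSup hB hA hAB

theorem monotone_sSup_sublevel_Icc (φ : ℝ → ℝ) :
    Monotone fun v => sSup {x : ℝ | x ∈ Icc (0:ℝ) 1 ∧ φ x ≤ v} := fun _ _ hab =>
  Real.sSup_mono_of_nonneg ⟨1, fun _ hx => hx.1.2⟩ (fun _ hx => hx.1.1)
    fun _ hx => ⟨hx.1, hx.2.trans hab⟩

theorem exists_mem_Ioc_le_of_not_upward_jump {φ : ℝ → ℝ} {ε v : ℝ} (hε : ε ∈ Ico (0:ℝ) 1)
    (hjump : ¬ ∃ δ > 0, ∀ η > 0, ∃ x' ∈ Ioo ε (ε + η) ∩ Icc (0:ℝ) 1, φ ε + δ < φ x')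
    (hv : φ ε < v) : ∃ x ∈ Ioc ε 1, φ x ≤ v := by
  push Not at hjump
  obtain ⟨η, hη, hle⟩ := hjump (v - φ ε) (sub_pos.2 hv)
  have hx : min (ε + η / 2) 1 ∈ Ioo ε (ε + η) ∩ Icc (0:ℝ) 1 :=
    ⟨⟨lt_min (by linarith) hε.2, (min_le_left _ _).trans_lt (by linarith)⟩,
      le_min (by linarith [hε.1]) zero_le_one, min_le_right _ _⟩
  exact ⟨_, ⟨hx.1.1, hx.2.2⟩, by linarith [hle _ hx]⟩

theorem stmt16_general (φ what whatinv : ℝ → ℝ)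
    (hge : ∀ ε ∈ Set.Icc (0:ℝ) 1, ε ≤ φ ε)
    (hup : ∀ x ∈ Set.Icc (0:ℝ) 1,
      ¬ (∃ δ > 0, ∀ η > 0, ∃ x' ∈ Set.Ioo (x - η) x ∩ Set.Icc (0:ℝ) 1,
            φ x' + δ < φ x) ∧
      ¬ (∃ δ > 0, ∀ η > 0, ∃ x' ∈ Set.Ioo x (x + η) ∩ Set.Icc (0:ℝ) 1,
            φ x + δ < φ x'))
    (hwhat : ∀ v, what v = sSup {ε : ℝ | ε ∈ Set.Icc (0:ℝ) 1 ∧ φ ε ≤ v})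
    (hwhatinv : ∀ ε, whatinv ε = sSup {v : ℝ | v ∈ Set.Icc (0:ℝ) 1 ∧ what v ≤ ε}) :
    Monotone what ∧ ∀ ε ∈ Set.Icc (0:ℝ) 1, whatinv ε ≤ φ ε := by
  have hwhat_eq : what = fun v => sSup {ε : ℝ | ε ∈ Icc (0:ℝ) 1 ∧ φ ε ≤ v} := funext hwhat
  refine ⟨hwhat_eq ▸ monotone_sSup_sublevel_Icc φ, fun ε hε => ?_⟩
  rw [hwhatinv]
  refine Real.sSup_le (fun v ⟨hv, hwv⟩ => ?_) (hε.1.trans (hge ε hε))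
  by_contra! hlt
  rcases hε.2.eq_or_lt with rfl | hε1
  · linarith [hge 1 hε, hv.2]
  · obtain ⟨x, hx, hφx⟩ := exists_mem_Ioc_le_of_not_upward_jump ⟨hε.1, hε1⟩ (hup ε hε).2 hlt
    have hxw : x ≤ what v :=
      hwhat v ▸ le_csSup ⟨1, fun _ h => h.1.2⟩ ⟨⟨hε.1.trans hx.1.le, hx.2⟩, hφx⟩
    linarith [hx.1]

/-- If `φ : [0,1] → [0,1]` is upward continuous (no upward jumps) and satisfies `φ ε ≥ ε`,
then `ŵ(v) = sup {ε : φ ε ≤ v}` is nondecreasing, and its generalized inverse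
`ŵ⁻¹(ε) = sup {v : ŵ v ≤ ε}` satisfies `ŵ⁻¹(ε) ≤ φ ε` for every `ε ∈ [0,1]`. -/
theorem stmt16 (φ what whatinv : ℝ → ℝ)
    (hmap : ∀ ε ∈ Set.Icc (0:ℝ) 1, φ ε ∈ Set.Icc (0:ℝ) 1)
    (hge : ∀ ε ∈ Set.Icc (0:ℝ) 1, ε ≤ φ ε)
    (hup : ∀ x ∈ Set.Icc (0:ℝ) 1,
      ¬ (∃ δ > 0, ∀ η > 0, ∃ x' ∈ Set.Ioo (x - η) x ∩ Set.Icc (0:ℝ) 1,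
            φ x' + δ < φ x) ∧
      ¬ (∃ δ > 0, ∀ η > 0, ∃ x' ∈ Set.Ioo x (x + η) ∩ Set.Icc (0:ℝ) 1,
            φ x + δ < φ x'))
    (hwhat : ∀ v, what v = sSup {ε : ℝ | ε ∈ Set.Icc (0:ℝ) 1 ∧ φ ε ≤ v})
    (hwhatinv : ∀ ε, whatinv ε = sSup {v : ℝ | v ∈ Set.Icc (0:ℝ) 1 ∧ what v ≤ ε}) :
    Monotone what ∧ ∀ ε ∈ Set.Icc (0:ℝ) 1, whatinv ε ≤ φ ε :=
  stmt16_general φ what whatinv hge hup hwhat hwhatinv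
end

section
/- Let φ : [0,1] → [0,1] be upward continuous and satisfy φ(ε) ≥ ε for all ε, and let ŵ⁻¹ be defined from φ as ŵ⁻¹(ε) = sup{v : sup{ε' : φ(ε') ≤ v} ≤ ε}. If h : [0,1] → [0,1] is monotone nondecreasing and h(ε) ≤ φ(ε) for all ε, then h(ε) ≤ ŵ⁻¹(ε) for all ε. That is, ŵ⁻¹ is the largest nondecreasing function pointwise dominated by φ. -/
/-! If `v < h ε`, every `x` with `φ x ≤ v` lies below `ε`: otherwise monotonicity would give
`h ε ≤ h x ≤ φ x ≤ v`. So `ŵ v ≤ ε` for all `v ∈ [0, h ε)`, and taking the supremum over these `v`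
gives `h ε ≤ ŵ⁻¹ ε`. -/

open Set

theorem sSup_sublevel_le_of_lt_of_monotoneOn {φ h : ℝ → ℝ} {s : Set ℝ} (hh : MonotoneOn h s)
    (hle : ∀ x ∈ s, h x ≤ φ x) {ε v : ℝ} (hε : ε ∈ s) (hε0 : 0 ≤ ε) (hv : v < h ε) :
    sSup {x | x ∈ s ∧ φ x ≤ v} ≤ ε := by
  refine Real.sSup_le (fun x ⟨hx, hφx⟩ => le_of_not_gt fun hεx => ?_) hε0
  exact hv.not_ge ((hh hε hx hεx.le).trans ((hle x hx).trans hφx))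

theorem le_sSup_of_Ico_zero_subset {S : Set ℝ} {a : ℝ} (hS : BddAbove S)
    (hS0 : ∀ x ∈ S, 0 ≤ x) (hsub : Ico 0 a ⊆ S) : a ≤ sSup S := by
  rcases le_or_gt a 0 with ha | ha
  · exact ha.trans (Real.sSup_nonneg hS0)
  · exact csSup_Ico ha ▸ csSup_le_csSup hS (nonempty_Ico.2 ha) hsub

theorem stmt17_general (φ h what whatinv : ℝ → ℝ)
    (hwhat : ∀ v, what v = sSup {ε : ℝ | ε ∈ Set.Icc (0:ℝ) 1 ∧ φ ε ≤ v})
    (hwhatinv : ∀ ε, whatinv ε = sSup {v : ℝ | v ∈ Set.Icc (0:ℝ) 1 ∧ what v ≤ ε})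
    (hhmono : MonotoneOn h (Set.Icc 0 1))
    (hhmap : ∀ ε ∈ Set.Icc (0:ℝ) 1, h ε ∈ Set.Icc (0:ℝ) 1)
    (hhle : ∀ ε ∈ Set.Icc (0:ℝ) 1, h ε ≤ φ ε) :
    ∀ ε ∈ Set.Icc (0:ℝ) 1, h ε ≤ whatinv ε := by
  intro ε hε
  rw [hwhatinv]
  refine le_sSup_of_Ico_zero_subset ⟨1, fun v hv => hv.1.2⟩ (fun v hv => hv.1.1) ?_
  rintro v ⟨hv0, hvε⟩
  refine ⟨⟨hv0, (hvε.trans_le (hhmap ε hε).2).le⟩, ?_⟩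
  rw [hwhat]
  exact sSup_sublevel_le_of_lt_of_monotoneOn hhmono hhle hε hε.1 hvε

/-- `ŵ⁻¹` is the largest nondecreasing function pointwise dominated by `φ`: if `φ` is
upward continuous with `φ ε ≥ ε`, and `h : [0,1] → [0,1]` is nondecreasing with `h ≤ φ`
pointwise, then `h ≤ ŵ⁻¹` pointwise, where `ŵ(v) = sup {ε : φ ε ≤ v}` and
`ŵ⁻¹(ε) = sup {v : ŵ v ≤ ε}`. -/
theorem stmt17 (φ h what whatinv : ℝ → ℝ)
    (hmap : ∀ ε ∈ Set.Icc (0:ℝ) 1, φ ε ∈ Set.Icc (0:ℝ) 1)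
    (hge : ∀ ε ∈ Set.Icc (0:ℝ) 1, ε ≤ φ ε)
    (hup : ∀ x ∈ Set.Icc (0:ℝ) 1,
      ¬ (∃ δ > 0, ∀ η > 0, ∃ x' ∈ Set.Ioo (x - η) x ∩ Set.Icc (0:ℝ) 1,
            φ x' + δ < φ x) ∧
      ¬ (∃ δ > 0, ∀ η > 0, ∃ x' ∈ Set.Ioo x (x + η) ∩ Set.Icc (0:ℝ) 1,
            φ x + δ < φ x'))
    (hwhat : ∀ v, what v = sSup {ε : ℝ | ε ∈ Set.Icc (0:ℝ) 1 ∧ φ ε ≤ v})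
    (hwhatinv : ∀ ε, whatinv ε = sSup {v : ℝ | v ∈ Set.Icc (0:ℝ) 1 ∧ what v ≤ ε})
    (hhmono : MonotoneOn h (Set.Icc 0 1))
    (hhmap : ∀ ε ∈ Set.Icc (0:ℝ) 1, h ε ∈ Set.Icc (0:ℝ) 1)
    (hhle : ∀ ε ∈ Set.Icc (0:ℝ) 1, h ε ≤ φ ε) :
    ∀ ε ∈ Set.Icc (0:ℝ) 1, h ε ≤ whatinv ε :=
  stmt17_general φ h what whatinv hwhat hwhatinv hhmono hhmap hhle
end

section
/- Suppose φ : [0,1] → [0,1] is upward continuous, and ε* ∈ [0,1] satisfies φ(ε') ≥ φ(ε*) for all ε' > ε*. Then ŵ⁻¹(ε*) = φ(ε*), where ŵ⁻¹ is the generalized inverse of ŵ(v) = sup{ε : φ(ε) ≤ v}. -/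
open Set

/-!
At `ε*` the sublevel sets of `φ` jump exactly at the level `φ ε*`: below it they lie in
`[0, ε*]` because `ε*` is a running minimum from the right, and above it they reach past `ε*`
by upward continuity from the right (at `ε* = 1` use `φ 1 ≥ 1` instead). Hence `ŵ v ≤ ε*`
holds precisely for `v < φ ε*` (and possibly `v = φ ε*`), so the supremum defining `ŵ⁻¹(ε*)`
is `φ ε*`.
-/

lemma csSup_sublevel_le_of_lt {φ : ℝ → ℝ} {a v : ℝ} (ha : 0 ≤ a)
    (hmin : ∀ ε ∈ Icc (0:ℝ) 1, a < ε → φ a ≤ φ ε) (hv : v < φ a) :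
    sSup {ε : ℝ | ε ∈ Icc (0:ℝ) 1 ∧ φ ε ≤ v} ≤ a := by
  refine Real.sSup_le (fun ε ⟨hε, hφε⟩ => ?_) ha
  by_contra! haε
  linarith [hmin ε hε haε]

lemma lt_csSup_sublevel_of_lt {φ : ℝ → ℝ} {a v : ℝ} (ha : a ∈ Ico (0:ℝ) 1)
    (hright : ¬ ∃ δ > 0, ∀ η > 0, ∃ x ∈ Ioo a (a + η) ∩ Icc (0:ℝ) 1, φ a + δ < φ x)
    (hv : φ a < v) :
    a < sSup {ε : ℝ | ε ∈ Icc (0:ℝ) 1 ∧ φ ε ≤ v} := by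
  push Not at hright
  obtain ⟨η, hη, hφ_le⟩ := hright (v - φ a) (sub_pos.mpr hv)
  set x := min (a + η / 2) ((a + 1) / 2)
  have hax : a < x := lt_min (by linarith) (by linarith [ha.2])
  have hx : x ∈ Ioo a (a + η) ∩ Icc (0:ℝ) 1 :=
    ⟨⟨hax, (min_le_left _ _).trans_lt (by linarith)⟩,
      ⟨ha.1.trans hax.le, (min_le_right _ _).trans (by linarith [ha.2])⟩⟩
  have hφx : φ x ≤ v := by linarith [hφ_le x hx]
  exact hax.trans_le (le_csSup ⟨1, fun ε hε => hε.1.2⟩ ⟨hx.2, hφx⟩)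

lemma le_of_csSup_sublevel_le {φ : ℝ → ℝ} {a v : ℝ} (ha : a ∈ Icc (0:ℝ) 1) (hage : a ≤ φ a)
    (hright : ¬ ∃ δ > 0, ∀ η > 0, ∃ x ∈ Ioo a (a + η) ∩ Icc (0:ℝ) 1, φ a + δ < φ x)
    (hv : v ∈ Icc (0:ℝ) 1) (hsup : sSup {ε : ℝ | ε ∈ Icc (0:ℝ) 1 ∧ φ ε ≤ v} ≤ a) :
    v ≤ φ a := by
  by_contra! hlt
  rcases ha.2.eq_or_lt with rfl | ha1
  · linarith [hv.2]
  · exact (lt_csSup_sublevel_of_lt ⟨ha.1, ha1⟩ hright hlt).not_ge hsup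

lemma csSup_Icc_setOf_eq {p : ℝ → Prop} {c : ℝ} (hc : c ∈ Icc (0:ℝ) 1)
    (hlt : ∀ v ∈ Ico 0 c, p v) (hle : ∀ v ∈ Icc (0:ℝ) 1, p v → v ≤ c) :
    sSup {v : ℝ | v ∈ Icc (0:ℝ) 1 ∧ p v} = c := by
  refine le_antisymm (Real.sSup_le (fun v hv => hle v hv.1 hv.2) hc.1) ?_
  rcases hc.1.eq_or_lt with rfl | hc0
  · exact Real.sSup_nonneg fun v hv => hv.1.1
  · have hsub : Ico 0 c ⊆ {v : ℝ | v ∈ Icc (0:ℝ) 1 ∧ p v} := fun v hv =>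
      ⟨⟨hv.1, hv.2.le.trans hc.2⟩, hlt v hv⟩
    calc c = sSup (Ico 0 c) := (csSup_Ico hc0).symm
      _ ≤ _ := csSup_le_csSup ⟨1, fun v hv => hv.1.2⟩ ⟨0, le_rfl, hc0⟩ hsub

/-- Claim 4 of Lemma 2: if `φ : [0,1] → [0,1]` is upward continuous with `φ ε ≥ ε`, and
`ε*` is a point such that `φ ε' ≥ φ ε*` for all `ε' > ε*`, then the monotone envelope
`ŵ⁻¹` agrees with `φ` at `ε*`: `ŵ⁻¹(ε*) = φ(ε*)`. -/
theorem stmt18 (φ what whatinv : ℝ → ℝ)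
    (hmap : ∀ ε ∈ Set.Icc (0:ℝ) 1, φ ε ∈ Set.Icc (0:ℝ) 1)
    (hge : ∀ ε ∈ Set.Icc (0:ℝ) 1, ε ≤ φ ε)
    (hup : ∀ x ∈ Set.Icc (0:ℝ) 1,
      ¬ (∃ δ > 0, ∀ η > 0, ∃ x' ∈ Set.Ioo (x - η) x ∩ Set.Icc (0:ℝ) 1,
            φ x' + δ < φ x) ∧
      ¬ (∃ δ > 0, ∀ η > 0, ∃ x' ∈ Set.Ioo x (x + η) ∩ Set.Icc (0:ℝ) 1,
            φ x + δ < φ x'))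
    (hwhat : ∀ v, what v = sSup {ε : ℝ | ε ∈ Set.Icc (0:ℝ) 1 ∧ φ ε ≤ v})
    (hwhatinv : ∀ ε, whatinv ε = sSup {v : ℝ | v ∈ Set.Icc (0:ℝ) 1 ∧ what v ≤ ε})
    (εstar : ℝ) (hεstar : εstar ∈ Set.Icc (0:ℝ) 1)
    (hmin : ∀ ε' ∈ Set.Icc (0:ℝ) 1, εstar < ε' → φ εstar ≤ φ ε') :
    whatinv εstar = φ εstar := by
  rw [hwhatinv]
  refine csSup_Icc_setOf_eq (hmap εstar hεstar) (fun v hv => ?_) (fun v hv hwv => ?_)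
  · rw [hwhat]
    exact csSup_sublevel_le_of_lt hεstar.1 hmin hv.2
  · rw [hwhat] at hwv
    exact le_of_csSup_sublevel_le hεstar (hge εstar hεstar) (hup εstar hεstar).2 hv hwv
end

section
/- Let f : [0,1] → ℝ be a density with f(v) ≥ f_lower > 0, and suppose F(1−ε/2) < ε²/2 for some ε ∈ (0, 1/8] where F is the CDF of f, and f is constant on [1−ε/2, 1). Then in any pair (w₁, w₂) with w₁ = 0 and equal profits ∫_0^{w₂} v f(v)dv = ∫_{w₂}^1 (v−w₂) f(v)dv, it must be that w₂ > 1−ε. -/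
open MeasureTheory Set intervalIntegral

/-!
Suppose `w₂ ≤ 1 - ε`. Since `v ≤ 1`, the low firm's profit is at most `F(w₂) ≤ F(1 - ε/2) < ε²/2`.
Every worker above `1 - ε/2` earns the high firm a margin of at least `ε/2`, and these workers
have mass `1 - F(1 - ε/2) > 1 - ε²/2`, so the high firm's profit exceeds `(ε/2)(1 - ε²/2)`.
Equal profits then force `ε > 1 - ε²/2`, which fails for `ε ≤ 1/8`.
-/

theorem IntervalIntegrable.of_mem_Icc {f : ℝ → ℝ} {a b x y : ℝ}
    (hf : IntervalIntegrable f volume a b) (hx : x ∈ Icc a b) (hy : y ∈ Icc a b) :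
    IntervalIntegrable f volume x y :=
  hf.mono_set (uIcc_subset_uIcc (Icc_subset_uIcc hx) (Icc_subset_uIcc hy))

theorem integral_id_mul_le_integral {f : ℝ → ℝ} {a b : ℝ} (hab : a ≤ b) (hb : b ≤ 1)
    (hf : IntervalIntegrable f volume a b) (hf0 : ∀ v ∈ Icc a b, 0 ≤ f v) :
    ∫ v in a..b, v * f v ≤ ∫ v in a..b, f v :=
  integral_mono_on hab (hf.continuousOn_mul continuousOn_id) hf fun v hv =>
    mul_le_of_le_one_left (hf0 v hv) (hv.2.trans hb)

theorem mul_integral_le_integral_sub_mul {g : ℝ → ℝ} {a c b : ℝ} (hac : a ≤ c) (hcb : c ≤ b)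
    (hg : IntervalIntegrable g volume a b) (hg0 : ∀ v ∈ Icc a b, 0 ≤ g v) :
    (c - a) * ∫ v in c..b, g v ≤ ∫ v in a..b, (v - a) * g v := by
  have hgi : IntervalIntegrable (fun v => (v - a) * g v) volume a b :=
    hg.continuousOn_mul (by fun_prop)
  have ha : a ∈ Icc a b := ⟨le_rfl, hac.trans hcb⟩
  have hc : c ∈ Icc a b := ⟨hac, hcb⟩
  have hb : b ∈ Icc a b := ⟨hac.trans hcb, le_rfl⟩
  have hhead : 0 ≤ ∫ v in a..c, (v - a) * g v :=
    integral_nonneg hac fun v hv => mul_nonneg (sub_nonneg.2 hv.1) (hg0 v ⟨hv.1, hv.2.trans hcb⟩)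
  have htail : ∫ v in c..b, (c - a) * g v ≤ ∫ v in c..b, (v - a) * g v :=
    integral_mono_on hcb ((hg.of_mem_Icc hc hb).const_mul _) (hgi.of_mem_Icc hc hb)
      fun v hv => mul_le_mul_of_nonneg_right (by linarith [hv.1]) (hg0 v ⟨hac.trans hv.1, hv.2⟩)
  rw [← intervalIntegral.integral_const_mul,
    ← integral_add_adjacent_intervals (hgi.of_mem_Icc ha hc) (hgi.of_mem_Icc hc hb)]
  linarith

theorem stmt19_general (flower ε : ℝ) (hfl : 0 < flower)
    (hε : ε ∈ Set.Ioc (0:ℝ) (1/8))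
    (f : ℝ → ℝ)
    (hlb : ∀ v ∈ Set.Icc (0:ℝ) 1, flower ≤ f v)
    (hdens : (∫ v in (0:ℝ)..1, f v) = 1)
    (hmass : (∫ v in (0:ℝ)..(1 - ε/2), f v) < ε ^ 2 / 2)
    (w₂ : ℝ) (hw₂ : w₂ ∈ Set.Icc (0:ℝ) 1)
    (heq : (∫ v in (0:ℝ)..w₂, v * f v) = ∫ v in w₂..1, (v - w₂) * f v) :
    1 - ε < w₂ := by
  obtain ⟨hε0, hε8⟩ := hε
  by_contra! hw
  have hf0 : ∀ v ∈ Icc (0:ℝ) 1, 0 ≤ f v := fun v hv => hfl.le.trans (hlb v hv)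
  -- a non-integrable `f` would have junk integral `0 ≠ 1`
  have hfi : IntervalIntegrable f volume 0 1 :=
    intervalIntegrable_of_integral_ne_zero (by rw [hdens]; exact one_ne_zero)
  have h0 : (0:ℝ) ∈ Icc (0:ℝ) 1 := ⟨le_rfl, zero_le_one⟩
  have h1 : (1:ℝ) ∈ Icc (0:ℝ) 1 := ⟨zero_le_one, le_rfl⟩
  have hc : 1 - ε/2 ∈ Icc (0:ℝ) 1 := ⟨by linarith, by linarith⟩
  set F := ∫ v in (0:ℝ)..(1 - ε/2), f v
  have hlow : ∫ v in (0:ℝ)..w₂, v * f v ≤ F :=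
    (integral_id_mul_le_integral hw₂.1 hw₂.2 (hfi.of_mem_Icc h0 hw₂)
      fun v hv => hf0 v ⟨hv.1, hv.2.trans hw₂.2⟩).trans
    (integral_mono_interval le_rfl hw₂.1 (by linarith)
      ((ae_restrict_iff' measurableSet_Ioc).2 (ae_of_all _ fun v hv =>
        hf0 v ⟨hv.1.le, by linarith [hv.2]⟩))
      (hfi.of_mem_Icc h0 hc))
  have htail : ∫ v in (1 - ε/2)..1, f v = 1 - F := by
    linarith [integral_add_adjacent_intervals (hfi.of_mem_Icc h0 hc) (hfi.of_mem_Icc hc h1)]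
  have hhigh : (1 - ε/2 - w₂) * (1 - F) ≤ ∫ v in w₂..1, (v - w₂) * f v :=
    htail ▸ mul_integral_le_integral_sub_mul (by linarith) hc.2 (hfi.of_mem_Icc hw₂ h1)
      fun v hv => hf0 v ⟨hw₂.1.trans hv.1, hv.2⟩
  nlinarith [mul_le_mul_of_nonneg_right (show ε/2 ≤ 1 - ε/2 - w₂ by linarith)
    (show 0 ≤ 1 - F by nlinarith)]

/-- If the density `f` concentrates mass near 1 (`F(1−ε/2) < ε²/2` for some `ε ∈ (0,1/8]`)
and is constant on `[1−ε/2, 1)`, then in any equal-profit pair with the low firm paying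
wage 0, the high firm's wage `w₂` must exceed `1 − ε`. -/
theorem stmt19 (flower fupper ε : ℝ) (hfl : 0 < flower)
    (hε : ε ∈ Set.Ioc (0:ℝ) (1/8))
    (f : ℝ → ℝ) (hm : Measurable f)
    (hlb : ∀ v ∈ Set.Icc (0:ℝ) 1, flower ≤ f v)
    (hub : ∀ v ∈ Set.Icc (0:ℝ) 1, f v ≤ fupper)
    (hdens : (∫ v in (0:ℝ)..1, f v) = 1)
    (hmass : (∫ v in (0:ℝ)..(1 - ε/2), f v) < ε ^ 2 / 2)
    (hconst : ∀ x ∈ Set.Ico (1 - ε/2) 1, ∀ y ∈ Set.Ico (1 - ε/2) 1, f x = f y)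
    (w₂ : ℝ) (hw₂ : w₂ ∈ Set.Icc (0:ℝ) 1)
    (heq : (∫ v in (0:ℝ)..w₂, v * f v) = ∫ v in w₂..1, (v - w₂) * f v) :
    1 - ε < w₂ :=
  stmt19_general flower ε hfl hε f hlb hdens hmass w₂ hw₂ heq
end
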